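/- For any n ≥ 1, the map A ↦ π(A) is a bijection from the power set of {2,3,…,n} onto F_n(123), the set of Fishburn permutations of length n avoiding 123. -/

import Mathlib

/-- Two lists of naturals have the same length and the same relative order
(including ties). -/
def SameRelOrder (u v : List ℕ) : Prop :=
  u.length = v.length ∧
    ∀ i j, i < u.length → j < u.length →
      (u.getD i 0 < u.getD j 0 ↔ v.getD i 0 < v.getD j 0)

/-- `α` contains `β` as a pattern: some subsequence of `α` has the same length
and relative order as `β`. -/
def SeqContains (α β : List ℕ) : Prop :=
  ∃ γ : List ℕ, γ.Sublist α ∧ SameRelOrder γ β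

/-- A copy of the Fishburn pattern `f` in `l`: indices `j`, `k` with `j + 1 < k`,
`l j = l k + 1` and `l (j+1) > l j`. -/
def HasFishburnCopy (l : List ℕ) : Prop :=
  ∃ j k, j + 1 < k ∧ k < l.length ∧
    l.getD j 0 = l.getD k 0 + 1 ∧ l.getD j 0 < l.getD (j + 1) 0

/-- A Fishburn permutation contains no copy of the Fishburn pattern `f`. -/
def FishburnFree (l : List ℕ) : Prop := ¬ HasFishburnCopy l

/-- `l` is a permutation of `1, …, n`, written in one-line notation. -/
def IsPermList (n : ℕ) (l : List ℕ) : Prop := l.Perm (List.range' 1 n)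

/-- The set of Fishburn permutations of length `n` avoiding each pattern in `pats`. -/
def FishburnSet (n : ℕ) (pats : List (List ℕ)) : Set (List ℕ) :=
  {l | IsPermList n l ∧ FishburnFree l ∧ ∀ p ∈ pats, ¬ SeqContains l p}

/-- The set of all permutations of length `n` avoiding each pattern in `pats`. -/
def PermSet (n : ℕ) (pats : List (List ℕ)) : Set (List ℕ) :=
  {l | IsPermList n l ∧ ∀ p ∈ pats, ¬ SeqContains l p}

/-- The number of ascents of a sequence. -/
def ascCount (l : List ℕ) : ℕ :=
  ((Finset.range l.length).filter
    (fun i => i + 1 < l.length ∧ l.getD i 0 < l.getD (i + 1) 0)).card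

/-- `l` is an ascent sequence. -/
def IsAscentSeq (l : List ℕ) : Prop :=
  (0 < l.length → l.getD 0 0 = 0) ∧
    ∀ j, 0 < j → j < l.length → l.getD j 0 ≤ 1 + ascCount (l.take j)

/-- The set of ascent sequences of length `n` avoiding each pattern in `pats`. -/
def AscentSeqSet (n : ℕ) (pats : List (List ℕ)) : Set (List ℕ) :=
  {l | l.length = n ∧ IsAscentSeq l ∧ ∀ p ∈ pats, ¬ SeqContains l p}

/-- The permutation `π(A)`: the elements of `A` in decreasing order, followed by `1`,
followed by the elements of `{2, …, n} \ A` in decreasing order. -/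
def piA (n : ℕ) (A : Finset ℕ) : List ℕ :=
  (A.sort (· ≤ ·)).reverse ++ 1 :: ((Finset.Icc 2 n \ A).sort (· ≤ ·)).reverse

/-! In a Fishburn permutation avoiding `123` every ascent starts at `1`: if `a < b` are adjacent
with `a ≥ 2`, then `a - 1` stands either before `a`, and `(a - 1) a b` is a `123`, or after `b`,
and `a b (a - 1)` is a copy of `f`. Hence the entries before `1` and the entries after `1` both
decrease, so the permutation is `π(A)` for `A` the set of entries before `1`. Conversely `π(A)` is
the concatenation of two decreasing runs, so it avoids `123`, and its only ascent starts at `1`,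
so a copy of `f` would need an entry `0`. -/

theorem List.length_le_one_of_pairwise_lt_of_pairwise_gt {α : Type*} [Preorder α] {l : List α}
    (hlt : l.Pairwise (· < ·)) (hgt : l.Pairwise (· > ·)) : l.length ≤ 1 := by
  rcases l with _ | ⟨a, _ | ⟨b, t⟩⟩
  · simp
  · simp
  · exact absurd ((List.rel_of_pairwise_cons hlt (by simp) : a < b))
      (List.rel_of_pairwise_cons hgt (by simp) : a > b).asymm

theorem List.sort_toFinset_reverse {α : Type*} [LinearOrder α] {w : List α}
    (hw : w.Pairwise (· > ·)) : (w.toFinset.sort (· ≤ ·)).reverse = w := by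
  rw [← List.toFinset_reverse, (List.toFinset_sort _ (List.nodup_reverse.2 hw.nodup)).2
    (List.pairwise_reverse.2 (hw.imp le_of_lt)), List.reverse_reverse]

theorem List.takeWhile_ne_append_cons {α : Type*} [DecidableEq α] {x : α} {u v : List α}
    (hx : x ∉ u) : (u ++ x :: v).takeWhile (· ≠ x) = u := by
  rw [List.takeWhile_append_of_pos fun a ha => by simpa using ne_of_mem_of_not_mem ha hx,
    List.takeWhile_cons_of_neg (by simp), List.append_nil]

namespace IsPermList

variable {n : ℕ} {l : List ℕ}

theorem mem_iff (h : IsPermList n l) {x : ℕ} : x ∈ l ↔ 1 ≤ x ∧ x ≤ n := by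
  rw [List.Perm.mem_iff h, List.mem_range'_1]
  omega

theorem nodup (h : IsPermList n l) : l.Nodup :=
  (List.Perm.nodup_iff h).2 (List.nodup_range' 1)

end IsPermList

theorem sameRelOrder_123_iff {γ : List ℕ} :
    SameRelOrder γ [1, 2, 3] ↔ ∃ a b c, γ = [a, b, c] ∧ a < b ∧ b < c := by
  constructor
  · rintro ⟨hlen, hrel⟩
    obtain ⟨a, b, c, rfl⟩ := List.length_eq_three.1 hlen
    exact ⟨a, b, c, rfl, by simpa using (hrel 0 1 (by simp) (by simp)).2 (by simp),
      by simpa using (hrel 1 2 (by simp) (by simp)).2 (by simp)⟩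
  · rintro ⟨a, b, c, rfl, hab, hbc⟩
    refine ⟨rfl, fun i j hi hj => ?_⟩
    simp only [List.length_cons, List.length_nil] at hi hj
    interval_cases i <;> interval_cases j <;> simp [List.getD] <;> omega

theorem not_seqContains_123_append {x y : List ℕ} (hx : x.Pairwise (· > ·))
    (hy : y.Pairwise (· > ·)) : ¬ SeqContains (x ++ y) [1, 2, 3] := by
  rintro ⟨γ, hsub, hrel⟩
  obtain ⟨a, b, c, rfl, hab, hbc⟩ := sameRelOrder_123_iff.1 hrel
  obtain ⟨γ₁, γ₂, hγ, h₁, h₂⟩ := List.sublist_append_iff.1 hsub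
  have hinc : (γ₁ ++ γ₂).Pairwise (· < ·) := by
    rw [← hγ]
    simp [hab, hbc, hab.trans hbc]
  rw [List.pairwise_append] at hinc
  have hlen := congrArg List.length hγ
  have := List.length_le_one_of_pairwise_lt_of_pairwise_gt hinc.1 (hx.sublist h₁)
  have := List.length_le_one_of_pairwise_lt_of_pairwise_gt hinc.2.1 (hy.sublist h₂)
  simp only [List.length_cons, List.length_nil, List.length_append] at hlen
  omega

theorem fishburnFree_of_isChain {l : List ℕ} (h0 : 0 ∉ l)
    (hc : l.IsChain (fun a b => a < b → a = 1)) : FishburnFree l := by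
  rintro ⟨j, k, hjk, hk, hfall, hasc⟩
  have hj : j + 1 < l.length := by omega
  simp only [List.getD_eq_getElem, hk, hj, Nat.lt_of_succ_lt hj] at hfall hasc
  have := List.isChain_iff_getElem.1 hc j (by omega) hasc
  exact h0 (by simpa [show l[k] = 0 by omega] using List.getElem_mem hk)

theorem eq_one_of_getElem_lt_getElem_succ {n : ℕ} {l : List ℕ} (hperm : IsPermList n l)
    (hff : FishburnFree l) (h123 : ¬ SeqContains l [1, 2, 3]) {i : ℕ}
    (hi : i + 1 < l.length) (hasc : l[i] < l[i + 1]) : l[i] = 1 := by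
  have hi' : i < l.length := by omega
  generalize ha : l[i] = a at hasc
  have hbound := hperm.mem_iff.1 (ha ▸ List.getElem_mem hi')
  by_contra hne
  obtain ⟨k, hk, hlk⟩ :=
    List.getElem_of_mem (hperm.mem_iff.2 (show 1 ≤ a - 1 ∧ a - 1 ≤ n by omega))
  rcases (show k < i ∨ k = i ∨ k = i + 1 ∨ i + 1 < k by omega) with hki | rfl | rfl | hik
  · apply h123
    refine ⟨[a - 1, a, l[i + 1]], ?_, sameRelOrder_123_iff.2 ⟨_, _, _, rfl, by omega, hasc⟩⟩
    have hpre : List.Sublist [a - 1] (l.take i) :=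
      List.singleton_sublist.2 (hlk ▸ List.mem_take_iff_getElem.2 ⟨k, by omega, rfl⟩)
    have hsuf : List.Sublist [a, l[i + 1]] (l.drop i) := by
      rw [List.drop_eq_getElem_cons hi', List.drop_eq_getElem_cons hi, ha]
      exact ((List.nil_sublist _).cons_cons _).cons_cons _
    simpa using hpre.append hsuf
  · omega
  · omega
  · exact hff ⟨i, k, hik, hk, by simp only [List.getD_eq_getElem, hk, hi']; omega,
      by simp only [List.getD_eq_getElem, hi, hi']; omega⟩

theorem isChain_of_fishburnFree {n : ℕ} {l : List ℕ} (hperm : IsPermList n l)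
    (hff : FishburnFree l) (h123 : ¬ SeqContains l [1, 2, 3]) :
    l.IsChain (fun a b => a < b → a = 1) :=
  List.isChain_iff_getElem.2 fun _ hi => eq_one_of_getElem_lt_getElem_succ hperm hff h123 hi

theorem pairwise_gt_of_isChain {u : List ℕ} (hc : u.IsChain (fun a b => a < b → a = 1))
    (hnd : u.Nodup) (h1 : 1 ∉ u) : u.Pairwise (· > ·) := by
  refine List.isChain_iff_pairwise.1 (List.isChain_iff_getElem.2 fun i hi => ?_)
  have hne : u[i] ≠ u[i + 1] := fun h => by simpa using hnd.getElem_inj_iff.1 h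
  have hne1 : u[i] ≠ 1 := fun h => h1 (h ▸ List.getElem_mem _)
  have := List.isChain_iff_getElem.1 hc i hi
  omega

def entriesBeforeOne (l : List ℕ) : Finset ℕ := (l.takeWhile (· ≠ 1)).toFinset

theorem isPermList_piA {n : ℕ} (hn : 1 ≤ n) {A : Finset ℕ} (hA : A ⊆ Finset.Icc 2 n) :
    IsPermList n (piA n A) := by
  have hrange : 1 ::ₘ (Finset.Icc 2 n).val = List.range' 1 n := by
    obtain ⟨m, rfl⟩ := Nat.exists_eq_add_of_le' hn
    simp [Nat.Icc_eq_range', List.range'_succ]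
  rw [IsPermList, piA, ← Multiset.coe_eq_coe, ← Multiset.coe_add, ← Multiset.cons_coe,
    Multiset.coe_reverse, Multiset.coe_reverse, Finset.sort_eq, Finset.sort_eq,
    Multiset.add_cons, Finset.sdiff_val, add_tsub_cancel_of_le (Finset.val_le_iff.2 hA), hrange]

theorem piA_mem_fishburnSet {n : ℕ} (hn : 1 ≤ n) {A : Finset ℕ} (hA : A ⊆ Finset.Icc 2 n) :
    piA n A ∈ FishburnSet n [[1, 2, 3]] := by
  have hperm := isPermList_piA hn hA
  have hA2 : ∀ a ∈ A, 1 < a := fun a ha => (Finset.mem_Icc.1 (hA ha)).1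
  have hfirst : ((A.sort (· ≤ ·)).reverse ++ [1]).Pairwise (· > ·) := by
    rw [List.pairwise_append]
    refine ⟨List.pairwise_reverse.2 (A.sortedLT_sort.pairwise), by simp, ?_⟩
    simpa using hA2
  have hsecond : ((Finset.Icc 2 n \ A).sort (· ≤ ·)).reverse.Pairwise (· > ·) :=
    List.pairwise_reverse.2 ((Finset.Icc 2 n \ A).sortedLT_sort.pairwise)
  have hsplit : piA n A = ((A.sort (· ≤ ·)).reverse ++ [1]) ++
      ((Finset.Icc 2 n \ A).sort (· ≤ ·)).reverse := by simp [piA]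
  refine ⟨hperm, fishburnFree_of_isChain (fun h0 => by simpa using hperm.mem_iff.1 h0) ?_, ?_⟩
  · rw [hsplit, List.isChain_append]
    refine ⟨hfirst.isChain.imp fun h _ => by omega, hsecond.isChain.imp fun h _ => by omega, ?_⟩
    simp
  · simpa [hsplit] using not_seqContains_123_append hfirst hsecond

theorem entriesBeforeOne_piA {n : ℕ} {A : Finset ℕ} (hA : A ⊆ Finset.Icc 2 n) :
    entriesBeforeOne (piA n A) = A := by
  have h1 : 1 ∉ (A.sort (· ≤ ·)).reverse := by simpa using fun h => by simpa using hA h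
  rw [entriesBeforeOne, piA, List.takeWhile_ne_append_cons h1, List.toFinset_reverse,
    Finset.sort_toFinset]

theorem entriesBeforeOne_subset {n : ℕ} {l : List ℕ} (hperm : IsPermList n l) :
    entriesBeforeOne l ⊆ Finset.Icc 2 n := by
  intro x hx
  rw [entriesBeforeOne, List.mem_toFinset] at hx
  have hx1 : x ≠ 1 := by simpa using List.mem_takeWhile_imp hx
  have := hperm.mem_iff.1 ((List.takeWhile_sublist _).subset hx)
  rw [Finset.mem_Icc]
  omega

theorem piA_entriesBeforeOne {n : ℕ} (hn : 1 ≤ n) {l : List ℕ}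
    (hl : l ∈ FishburnSet n [[1, 2, 3]]) : piA n (entriesBeforeOne l) = l := by
  obtain ⟨hperm, hff, havoid⟩ := hl
  have hchain := isChain_of_fishburnFree hperm hff (havoid _ (by simp))
  obtain ⟨u, v, rfl⟩ := List.append_of_mem (hperm.mem_iff.2 ⟨le_rfl, hn⟩)
  obtain ⟨hu, hv', hdisj⟩ := List.nodup_append.1 hperm.nodup
  obtain ⟨h1v, hv⟩ := List.nodup_cons.1 hv'
  have h1u : 1 ∉ u := fun h => by simpa using hdisj _ h 1 (by simp)
  rw [List.isChain_append, List.isChain_cons] at hchain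
  have hvu : v.toFinset = Finset.Icc 2 n \ u.toFinset := by
    ext x
    have hmem := hperm.mem_iff (x := x)
    simp only [List.mem_append, List.mem_cons] at hmem
    simp only [List.mem_toFinset, Finset.mem_sdiff, Finset.mem_Icc]
    have := hdisj x
    grind
  rw [entriesBeforeOne, List.takeWhile_ne_append_cons h1u, piA, ← hvu,
    List.sort_toFinset_reverse (pairwise_gt_of_isChain hchain.1 hu h1u),
    List.sort_toFinset_reverse (pairwise_gt_of_isChain hchain.2.1.2 hv h1v)]

/-- For any `n ≥ 1`, the map `A ↦ π(A)` is a bijection from the power set of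
`{2, 3, …, n}` onto `F_n(123)`. -/
theorem stmt4 (n : ℕ) (hn : 1 ≤ n) :
    Set.BijOn (piA n) {A : Finset ℕ | A ⊆ Finset.Icc 2 n}
      (FishburnSet n [[1, 2, 3]]) :=
  Set.InvOn.bijOn (f' := entriesBeforeOne)
    ⟨fun _ hA => entriesBeforeOne_piA hA, fun _ hl => piA_entriesBeforeOne hn hl⟩
    (fun _ hA => piA_mem_fishburnSet hn hA) (fun _ hl => entriesBeforeOne_subset hl.1)
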